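/- There exist absolute constants c > 0 and C > 0 such that for all exponents 1 ≤ q ≤ p ≤ ∞ and 1 ≤ σ ≤ θ ≤ ∞, all m, k ∈ ℕ, and all n ∈ ℤ_+ with n ≤ mk/2, one has c · m^{1/q−1/p} k^{1/σ−1/θ} ≤ d_n(B^{m,k}_{p,θ}, l^{m,k}_{q,σ}) ≤ C · m^{1/q−1/p} k^{1/σ−1/θ} (with the convention 1/∞ = 0). -/

import Mathlib

open scoped ENNReal NNReal BigOperators Pointwise

noncomputable section

def lNorm (s : ℝ≥0∞) {ι : Type*} [Fintype ι] (x : ι → ℝ) : ℝ :=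
  if s = ∞ then ⨆ i, |x i| else (∑ i, |x i| ^ s.toReal) ^ (1 / s.toReal)

def mixedNorm (p θ : ℝ≥0∞) {m k : ℕ} (x : Fin m → Fin k → ℝ) : ℝ :=
  lNorm θ fun j => lNorm p fun i => x i j

def mixedBall (m k : ℕ) (p θ : ℝ≥0∞) : Set (Fin m → Fin k → ℝ) :=
  {x | mixedNorm p θ x ≤ 1}

def kolWidth (m k n : ℕ) (M : Set (Fin m → Fin k → ℝ)) (q σ : ℝ≥0∞) : ℝ :=
  ⨅ L : {L : Submodule ℝ (Fin m → Fin k → ℝ) // Module.finrank ℝ L ≤ n},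
    ⨆ x : M, ⨅ y : L.1,
      mixedNorm q σ ((x : Fin m → Fin k → ℝ) - (y : Fin m → Fin k → ℝ))

def ir (p : ℝ≥0∞) : ℝ := p⁻¹.toReal

def omegaE (p q : ℝ≥0∞) : ℝ :=
  if q = 2 then 1 else min ((ir p - ir q) / (1 / 2 - ir q)) 1

def expOf (t : ℝ) : ℝ≥0∞ := (ENNReal.ofReal t)⁻¹

def Phi (q σ : ℝ≥0∞) (m k n : ℕ) (p θ : ℝ≥0∞) : ℝ≥0∞ :=
  let M : ℝ≥0∞ := m
  let K : ℝ≥0∞ := k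
  let W : ℝ≥0∞ := ((n : ℝ≥0∞))⁻¹ ^ ((1 : ℝ) / 2) * M ^ ir q * K ^ ir σ
  let Wm : ℝ≥0∞ := ((n : ℝ≥0∞))⁻¹ ^ ((1 : ℝ) / 2) * M ^ ((1 : ℝ) / 2) * K ^ ir σ
  let Wk : ℝ≥0∞ := ((n : ℝ≥0∞))⁻¹ ^ ((1 : ℝ) / 2) * M ^ ir q * K ^ ((1 : ℝ) / 2)
  if q ≤ p then
    if σ ≤ θ then
      M ^ (ir q - ir p) * K ^ (ir σ - ir θ)
    else
      min (M ^ (ir q - ir p)) (M ^ (ir q - ir p) * Wm ^ omegaE θ σ)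
  else if σ ≤ θ then
    min (K ^ (ir σ - ir θ)) (K ^ (ir σ - ir θ) * Wk ^ omegaE p q)
  else if p ≤ 2 ∧ θ ≤ 2 then
    min 1 W
  else if omegaE p q ≤ omegaE θ σ then
    min (min 1 (W ^ omegaE p q)) (M ^ (ir q - ir p) * Wm ^ omegaE θ σ)
  else
    min (min 1 (W ^ omegaE θ σ)) (K ^ (ir σ - ir θ) * Wk ^ omegaE p q)

/-- `Ψ₀ = inf_{α ∈ A} ν_α Φ(p_α, θ_α)`. -/
def Psi0 {A : Type*} (q σ : ℝ≥0∞) (m k n : ℕ) (p θ : A → ℝ≥0∞) (ν : A → ℝ) : ℝ≥0∞ :=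
  ⨅ a : A, ENNReal.ofReal (ν a) * Phi q σ m k n (p a) (θ a)

/-- `Ψ₁`: infimum over pairs `(α, β) ∈ N₁`, i.e. `p_α ≠ q` and
`1/q = (1−λ)/p_α + λ/p_β` for some `λ ∈ (0,1)`, of
`ν_α^{1−λ} ν_β^{λ} Φ(q, θ̂_{α,β})` where `1/θ̂_{α,β} = (1−λ)/θ_α + λ/θ_β`. -/
def Psi1 {A : Type*} (q σ : ℝ≥0∞) (m k n : ℕ) (p θ : A → ℝ≥0∞) (ν : A → ℝ) : ℝ≥0∞ :=
  ⨅ (a : A) (b : A) (lam : ℝ)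
    (_ : 0 < lam ∧ lam < 1 ∧ p a ≠ q ∧
      ir q = (1 - lam) * ir (p a) + lam * ir (p b)),
    ENNReal.ofReal (ν a) ^ (1 - lam) * ENNReal.ofReal (ν b) ^ lam *
      Phi q σ m k n q (expOf ((1 - lam) * ir (θ a) + lam * ir (θ b)))

/-- `Ψ₂`: infimum over `(α, β) ∈ N₂` of `ν_α^{1−μ} ν_β^{μ} Φ(p̂_{α,β}, σ)`. -/
def Psi2 {A : Type*} (q σ : ℝ≥0∞) (m k n : ℕ) (p θ : A → ℝ≥0∞) (ν : A → ℝ) : ℝ≥0∞ :=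
  ⨅ (a : A) (b : A) (lam : ℝ)
    (_ : 0 < lam ∧ lam < 1 ∧ θ a ≠ σ ∧
      ir σ = (1 - lam) * ir (θ a) + lam * ir (θ b)),
    ENNReal.ofReal (ν a) ^ (1 - lam) * ENNReal.ofReal (ν b) ^ lam *
      Phi q σ m k n (expOf ((1 - lam) * ir (p a) + lam * ir (p b))) σ

/-- `Ψ₃`: infimum over `(α, β) ∈ N₃` of `ν_α^{1−λ} ν_β^{λ} Φ(2, θ̃_{α,β})`. -/
def Psi3 {A : Type*} (q σ : ℝ≥0∞) (m k n : ℕ) (p θ : A → ℝ≥0∞) (ν : A → ℝ) : ℝ≥0∞ :=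
  ⨅ (a : A) (b : A) (lam : ℝ)
    (_ : 0 < lam ∧ lam < 1 ∧ p a ≠ 2 ∧
      (1 : ℝ) / 2 = (1 - lam) * ir (p a) + lam * ir (p b)),
    ENNReal.ofReal (ν a) ^ (1 - lam) * ENNReal.ofReal (ν b) ^ lam *
      Phi q σ m k n 2 (expOf ((1 - lam) * ir (θ a) + lam * ir (θ b)))

/-- `Ψ₄`: infimum over `(α, β) ∈ N₄` of `ν_α^{1−μ} ν_β^{μ} Φ(p̃_{α,β}, 2)`. -/
def Psi4 {A : Type*} (q σ : ℝ≥0∞) (m k n : ℕ) (p θ : A → ℝ≥0∞) (ν : A → ℝ) : ℝ≥0∞ :=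
  ⨅ (a : A) (b : A) (lam : ℝ)
    (_ : 0 < lam ∧ lam < 1 ∧ θ a ≠ 2 ∧
      (1 : ℝ) / 2 = (1 - lam) * ir (θ a) + lam * ir (θ b)),
    ENNReal.ofReal (ν a) ^ (1 - lam) * ENNReal.ofReal (ν b) ^ lam *
      Phi q σ m k n (expOf ((1 - lam) * ir (p a) + lam * ir (p b))) 2

/-- `Ψ₅`: infimum over `(α, β) ∈ N₅`, i.e. such that for some `λ ∈ (0,1)` the
interpolated exponents satisfy `p_{α,β} ∈ (2,q)`, `θ_{α,β} ∈ (2,σ)`, lie on the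
"critical line", while `(1/p_α, 1/θ_α)` does not, of
`ν_α^{1−λ} ν_β^{λ} Φ(p_{α,β}, θ_{α,β})`. -/
def Psi5 {A : Type*} (q σ : ℝ≥0∞) (m k n : ℕ) (p θ : A → ℝ≥0∞) (ν : A → ℝ) : ℝ≥0∞ :=
  ⨅ (a : A) (b : A) (lam : ℝ)
    (_ : 0 < lam ∧ lam < 1 ∧
      ir q < (1 - lam) * ir (p a) + lam * ir (p b) ∧
      (1 - lam) * ir (p a) + lam * ir (p b) < 1 / 2 ∧
      ir σ < (1 - lam) * ir (θ a) + lam * ir (θ b) ∧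
      (1 - lam) * ir (θ a) + lam * ir (θ b) < 1 / 2 ∧
      ((1 - lam) * ir (p a) + lam * ir (p b) - ir q) / (1 / 2 - ir q) =
        ((1 - lam) * ir (θ a) + lam * ir (θ b) - ir σ) / (1 / 2 - ir σ) ∧
      (ir (p a) - ir q) / (1 / 2 - ir q) ≠ (ir (θ a) - ir σ) / (1 / 2 - ir σ)),
    ENNReal.ofReal (ν a) ^ (1 - lam) * ENNReal.ofReal (ν b) ^ lam *
      Phi q σ m k n (expOf ((1 - lam) * ir (p a) + lam * ir (p b)))
        (expOf ((1 - lam) * ir (θ a) + lam * ir (θ b)))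

/-- `Ψ₆`: infimum over triples `(α, β, γ) ∈ N₆` (with positive weights `τ` summing to `1`
interpolating `(1/q, 1/σ)`, the three points not collinear) of
`ν_α^{τ_α} ν_β^{τ_β} ν_γ^{τ_γ} Φ(q, σ)`. -/
def Psi6 {A : Type*} (q σ : ℝ≥0∞) (m k n : ℕ) (p θ : A → ℝ≥0∞) (ν : A → ℝ) : ℝ≥0∞ :=
  ⨅ (a : A) (b : A) (c : A) (ta : ℝ) (tb : ℝ) (tc : ℝ)
    (_ : 0 < ta ∧ 0 < tb ∧ 0 < tc ∧ ta + tb + tc = 1 ∧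
      ir q = ta * ir (p a) + tb * ir (p b) + tc * ir (p c) ∧
      ir σ = ta * ir (θ a) + tb * ir (θ b) + tc * ir (θ c) ∧
      (ir (p b) - ir (p a)) * (ir (θ c) - ir (θ a)) ≠
        (ir (p c) - ir (p a)) * (ir (θ b) - ir (θ a))),
    ENNReal.ofReal (ν a) ^ ta * ENNReal.ofReal (ν b) ^ tb * ENNReal.ofReal (ν c) ^ tc *
      Phi q σ m k n q σ

/-- `Ψ₇`: as `Ψ₆`, with `(1/2, 1/2)` in place of `(1/q, 1/σ)`. -/
def Psi7 {A : Type*} (q σ : ℝ≥0∞) (m k n : ℕ) (p θ : A → ℝ≥0∞) (ν : A → ℝ) : ℝ≥0∞ :=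
  ⨅ (a : A) (b : A) (c : A) (ta : ℝ) (tb : ℝ) (tc : ℝ)
    (_ : 0 < ta ∧ 0 < tb ∧ 0 < tc ∧ ta + tb + tc = 1 ∧
      (1 : ℝ) / 2 = ta * ir (p a) + tb * ir (p b) + tc * ir (p c) ∧
      (1 : ℝ) / 2 = ta * ir (θ a) + tb * ir (θ b) + tc * ir (θ c) ∧
      (ir (p b) - ir (p a)) * (ir (θ c) - ir (θ a)) ≠
        (ir (p c) - ir (p a)) * (ir (θ b) - ir (θ a))),
    ENNReal.ofReal (ν a) ^ ta * ENNReal.ofReal (ν b) ^ tb * ENNReal.ofReal (ν c) ^ tc *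
      Phi q σ m k n 2 2

/-- `min_{0 ≤ j ≤ 7} Ψ_j`. -/
def PsiMin {A : Type*} (q σ : ℝ≥0∞) (m k n : ℕ) (p θ : A → ℝ≥0∞) (ν : A → ℝ) : ℝ≥0∞ :=
  Psi0 q σ m k n p θ ν ⊓ Psi1 q σ m k n p θ ν ⊓ Psi2 q σ m k n p θ ν ⊓
    Psi3 q σ m k n p θ ν ⊓ Psi4 q σ m k n p θ ν ⊓ Psi5 q σ m k n p θ ν ⊓
    Psi6 q σ m k n p θ ν ⊓ Psi7 q σ m k n p θ ν

/-- The set `V^{m,k}_{r,l}`: the convex hull of all `γ(e)`, where `e` is the 0/1 matrix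
supported on the first `r` rows and first `l` columns and `γ` ranges over all
permutations of rows/columns composed with sign changes of rows/columns. -/
def Vset (m k r l : ℕ) : Set (Fin m → Fin k → ℝ) :=
  convexHull ℝ {y | ∃ (t₁ : Equiv.Perm (Fin m)) (t₂ : Equiv.Perm (Fin k))
      (e₁ : Fin m → ℝ) (e₂ : Fin k → ℝ),
    (∀ i, e₁ i = 1 ∨ e₁ i = -1) ∧ (∀ j, e₂ j = 1 ∨ e₂ j = -1) ∧
    y = fun i j => e₁ i * e₂ j * (if (t₁ i : ℕ) < r ∧ (t₂ j : ℕ) < l then 1 else 0)}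

/-!
The upper bound is attained already by the zero subspace: Hölder's inequality in each factor
gives `‖x‖_{q,σ} ≤ m^{1/q-1/p} k^{1/σ-1/θ} ‖x‖_{p,θ}`.

For the lower bound fix a subspace `L` of dimension `d ≤ mk/2`. An extreme point `g` of the
section of the unit cube by `L^⊥` has at least `mk - d` coordinates equal to `±1`, so
`‖g‖₁ ≥ mk - d`. The sign pattern `ε` of `g` then satisfies
`‖ε - y‖₁ ≥ ⟨ε - y, g⟩ = ‖g‖₁ ≥ mk/2` for every `y ∈ L`. Rescaling `ε` into `B_{p,θ}` and
bounding the `(q,σ)`-norm from below by the `(1,1)`-norm gives the bound with `c = 1/2`.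
-/

open scoped Topology
open Finset Module

section signPatterns

variable {ι : Type*} [Fintype ι]

theorem Submodule.exists_norm_le_one_finrank_le_card_abs_eq_one (V : Submodule ℝ (ι → ℝ)) :
    ∃ g ∈ V, ‖g‖ ≤ 1 ∧ finrank ℝ V ≤ #{i | |g i| = 1} := by
  have hK : IsCompact ((V : Set (ι → ℝ)) ∩ Metric.closedBall 0 1) :=
    (isCompact_closedBall 0 1).inter_left V.closed_of_finiteDimensional
  obtain ⟨g, ⟨hgV, hg1⟩, hgext⟩ :=
    hK.extremePoints_nonempty ⟨0, V.zero_mem, Metric.mem_closedBall_self zero_le_one⟩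
  rw [mem_closedBall_zero_iff] at hg1
  refine ⟨g, hgV, hg1, ?_⟩
  set S : Finset ι := {i | |g i| = 1}
  -- otherwise some `h ≠ 0` in `V` vanishes on `S`, and `g` could be moved both ways along `h`
  by_contra! hS
  let restrict : V →ₗ[ℝ] (S → ℝ) :=
    LinearMap.pi fun i => (LinearMap.proj (i : ι)).comp V.subtype
  obtain ⟨⟨h, hhV⟩, hker, hne⟩ := Submodule.exists_mem_ne_zero_of_ne_bot
    (LinearMap.ker_ne_bot_of_finrank_lt (f := restrict) (by simpa using hS))
  have hhS : ∀ i ∈ S, h i = 0 := fun i hi => by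
    simpa [restrict] using congr_fun (LinearMap.mem_ker.1 hker) ⟨i, hi⟩
  have hnear : ∀ᶠ t in 𝓝 (0 : ℝ), ‖g + t • h‖ ≤ 1 := by
    simp only [pi_norm_le_iff_of_nonneg zero_le_one, Pi.add_apply, Pi.smul_apply, smul_eq_mul,
      Real.norm_eq_abs]
    refine Filter.eventually_all.2 fun i => ?_
    by_cases hi : i ∈ S
    · simp [hhS i hi, (mem_filter.1 hi).2]
    · have hgi : |g i| < 1 := lt_of_le_of_ne
        (by simpa using (norm_le_pi_norm g i).trans hg1) (by simpa [S] using hi)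
      have hcont : Continuous fun t : ℝ => |g i + t * h i| := by fun_prop
      exact ((hcont.tendsto' 0 _ (by simp)).eventually_lt_const hgi).mono fun _ => le_of_lt
  obtain ⟨δ, hδ, hball⟩ := Metric.eventually_nhds_iff.1 hnear
  have hmem : ∀ t : ℝ, |t| < δ → g + t • h ∈ (V : Set (ι → ℝ)) ∩ Metric.closedBall 0 1 :=
    fun t ht => ⟨V.add_mem hgV (V.smul_mem t hhV),
      mem_closedBall_zero_iff.2 (hball (by simpa using ht))⟩
  have hseg : g ∈ openSegment ℝ (g + (δ / 2) • h) (g + (-(δ / 2)) • h) :=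
    ⟨1 / 2, 1 / 2, by norm_num, by norm_num, by norm_num, by module⟩
  have hδ2 : |δ / 2| < δ := by rw [abs_of_pos (by positivity)]; linarith
  have := hgext (hmem _ hδ2) (hmem _ (by rwa [abs_neg])) hseg
  exact hne (Subtype.ext (by simpa [hδ.ne'] using this))

theorem Submodule.exists_abs_eq_one_card_sub_finrank_le_sum_abs_sub (L : Submodule ℝ (ι → ℝ)) :
    ∃ ε : ι → ℝ, (∀ i, |ε i| = 1) ∧
      ∀ y ∈ L, (Fintype.card ι : ℝ) - finrank ℝ L ≤ ∑ i, |ε i - y i| := by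
  let pairing : (ι → ℝ) →ₗ[ℝ] (L →ₗ[ℝ] ℝ) := (dotProductBilin ℝ ℝ).compl₂ L.subtype
  obtain ⟨g, hgV, hg1, hcard⟩ :=
    (LinearMap.ker pairing).exists_norm_le_one_finrank_le_card_abs_eq_one
  have hg1' : ∀ i, |g i| ≤ 1 := fun i => by simpa using (norm_le_pi_norm g i).trans hg1
  have hrank : Fintype.card ι ≤ finrank ℝ L + finrank ℝ (LinearMap.ker pairing) := by
    have hsum := pairing.finrank_range_add_finrank_ker
    have hrange := (LinearMap.range pairing).finrank_le
    rw [finrank_fintype_fun_eq_card] at hsum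
    rw [Subspace.dual_finrank_eq] at hrange
    omega
  have hactive : ((#{i | |g i| = 1} : ℕ) : ℝ) ≤ ∑ i, |g i| := by
    rw [natCast_card_filter]
    exact sum_le_sum fun i _ => by split_ifs with h <;> simp [h]
  set ε : ι → ℝ := fun i => if 0 ≤ g i then 1 else -1
  have hεg : ∀ i, ε i * g i = |g i| := fun i => by
    by_cases h : 0 ≤ g i
    · simp [ε, h, abs_of_nonneg h]
    · simp [ε, h, abs_of_neg (not_le.1 h)]
  refine ⟨ε, fun i => by by_cases h : 0 ≤ g i <;> simp [ε, h], fun y hy => ?_⟩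
  have horth : ∑ i, g i * y i = 0 := LinearMap.congr_fun (LinearMap.mem_ker.1 hgV) ⟨y, hy⟩
  have hpoint : ∀ i, |g i| ≤ |ε i - y i| + g i * y i := fun i =>
    calc |g i| = (ε i - y i) * g i + g i * y i := by rw [← hεg]; ring
      _ ≤ |ε i - y i| * |g i| + g i * y i :=
        add_le_add ((le_abs_self _).trans (abs_mul _ _).le) le_rfl
      _ ≤ |ε i - y i| + g i * y i :=
        add_le_add (mul_le_of_le_one_right (abs_nonneg _) (hg1' i)) le_rfl
  calc (Fintype.card ι : ℝ) - finrank ℝ L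
      ≤ ∑ i, |g i| := by
        have hker : (finrank ℝ (LinearMap.ker pairing) : ℝ) ≤ ∑ i, |g i| :=
          (Nat.cast_le.2 hcard).trans hactive
        have : (Fintype.card ι : ℝ) ≤ finrank ℝ L + finrank ℝ (LinearMap.ker pairing) := by
          exact_mod_cast hrank
        linarith
    _ ≤ ∑ i, (|ε i - y i| + g i * y i) := sum_le_sum fun i _ => hpoint i
    _ = ∑ i, |ε i - y i| := by rw [sum_add_distrib, horth, add_zero]

end signPatterns

section lNorm

variable {ι : Type*} [Fintype ι]

lemma ir_eq_inv_toReal (s : ℝ≥0∞) : ir s = s.toReal⁻¹ := ENNReal.toReal_inv s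

@[simp] lemma ir_top : ir ∞ = 0 := by simp [ir]

@[simp] lemma ir_one : ir 1 = 1 := by simp [ir]

lemma lNorm_nonneg (s : ℝ≥0∞) (x : ι → ℝ) : 0 ≤ lNorm s x := by
  unfold lNorm
  split_ifs
  · exact Real.iSup_nonneg fun i => abs_nonneg _
  · positivity

lemma lNorm_mono {s : ℝ≥0∞} {x y : ι → ℝ} (h : ∀ i, |x i| ≤ |y i|) : lNorm s x ≤ lNorm s y := by
  unfold lNorm
  split_ifs
  · exact Real.iSup_le (fun i => (h i).trans (le_ciSup (Finite.bddAbove_range fun i => |y i|) i))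
      (Real.iSup_nonneg fun i => abs_nonneg _)
  · gcongr (∑ i, ?_ ^ _) ^ _ with i
    exact h i

lemma lNorm_const_mul {s : ℝ≥0∞} (hs : s ≠ 0) {c : ℝ} (hc : 0 ≤ c) (x : ι → ℝ) :
    lNorm s (fun i => c * x i) = c * lNorm s x := by
  unfold lNorm
  simp only [abs_mul, abs_of_nonneg hc]
  split_ifs with htop
  · exact (Real.mul_iSup_of_nonneg hc _).symm
  · have ht : s.toReal ≠ 0 := (ENNReal.toReal_pos hs htop).ne'
    simp only [Real.mul_rpow hc (abs_nonneg _), ← mul_sum]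
    rw [Real.mul_rpow (by positivity) (by positivity), ← Real.rpow_mul hc, mul_one_div_cancel ht,
      Real.rpow_one]

lemma lNorm_one (x : ι → ℝ) : lNorm 1 x = ∑ i, |x i| := by
  simp [lNorm]

lemma lNorm_top_le {x : ι → ℝ} {c : ℝ} (hc : 0 ≤ c) (h : ∀ i, |x i| ≤ c) : lNorm ∞ x ≤ c := by
  simpa [lNorm] using Real.iSup_le h hc

variable [Nonempty ι]

lemma lNorm_le_card_rpow_mul_lNorm_top {q : ℝ≥0∞} (hq : q ≠ 0) (x : ι → ℝ) :
    lNorm q x ≤ (Fintype.card ι : ℝ) ^ ir q * lNorm ∞ x := by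
  by_cases hqtop : q = ∞
  · simp [hqtop]
  have ht : 0 < q.toReal := ENNReal.toReal_pos hq hqtop
  have hM := lNorm_nonneg ∞ x
  have hle : ∀ i, |x i| ≤ lNorm ∞ x := fun i => by
    simpa [lNorm] using le_ciSup (Finite.bddAbove_range fun i => |x i|) i
  calc lNorm q x ≤ (∑ _i : ι, lNorm ∞ x ^ q.toReal) ^ (1 / q.toReal) := by
        rw [lNorm, if_neg hqtop]
        gcongr with i
        exact hle i
    _ = (Fintype.card ι : ℝ) ^ ir q * lNorm ∞ x := by
        rw [sum_const, card_univ, nsmul_eq_mul, Real.mul_rpow (by positivity) (by positivity),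
          ← Real.rpow_mul hM, mul_one_div_cancel ht.ne', Real.rpow_one, ir_eq_inv_toReal, one_div]

lemma lNorm_le_card_rpow_mul_of_ne_top {q p : ℝ≥0∞} (hq : q ≠ 0) (hqp : q ≤ p) (hp : p ≠ ∞)
    (x : ι → ℝ) : lNorm q x ≤ (Fintype.card ι : ℝ) ^ (ir q - ir p) * lNorm p x := by
  have hqtop : q ≠ ∞ := ne_top_of_le_ne_top hp hqp
  set t := q.toReal
  set u := p.toReal
  have ht : 0 < t := ENNReal.toReal_pos hq hqtop
  have htu : t ≤ u := ENNReal.toReal_mono hp hqp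
  have hu : 0 < u := ht.trans_le htu
  have hN : (0 : ℝ) < Fintype.card ι := by exact_mod_cast Fintype.card_pos
  have hmean := Real.rpow_sum_le_const_mul_sum_rpow_of_nonneg univ ((one_le_div ht).2 htu)
    (f := fun i => |x i| ^ t) (fun i _ => by positivity)
  simp only [← Real.rpow_mul (abs_nonneg _), mul_div_cancel₀ u ht.ne', card_univ] at hmean
  rw [lNorm, lNorm, if_neg hqtop, if_neg hp, ir_eq_inv_toReal, ir_eq_inv_toReal]
  calc (∑ i, |x i| ^ t) ^ (1 / t) = ((∑ i, |x i| ^ t) ^ (u / t)) ^ (1 / u) := by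
        rw [← Real.rpow_mul (by positivity)]
        congr 1
        field_simp
    _ ≤ ((Fintype.card ι : ℝ) ^ (u / t - 1) * ∑ i, |x i| ^ u) ^ (1 / u) := by gcongr
    _ = (Fintype.card ι : ℝ) ^ (t⁻¹ - u⁻¹) * (∑ i, |x i| ^ u) ^ (1 / u) := by
        rw [Real.mul_rpow (by positivity) (by positivity), ← Real.rpow_mul hN.le]
        congr 2
        field_simp

lemma lNorm_le_card_rpow_mul {q p : ℝ≥0∞} (hq : q ≠ 0) (hqp : q ≤ p) (x : ι → ℝ) :
    lNorm q x ≤ (Fintype.card ι : ℝ) ^ (ir q - ir p) * lNorm p x := by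
  by_cases hp : p = ∞
  · simpa [hp] using lNorm_le_card_rpow_mul_lNorm_top hq x
  · exact lNorm_le_card_rpow_mul_of_ne_top hq hqp hp x

end lNorm

section mixedNorm

variable {m k : ℕ}

lemma mixedNorm_nonneg (p θ : ℝ≥0∞) (x : Fin m → Fin k → ℝ) : 0 ≤ mixedNorm p θ x :=
  lNorm_nonneg _ _

lemma mixedNorm_one_one (x : Fin m → Fin k → ℝ) : mixedNorm 1 1 x = ∑ j, ∑ i, |x i j| := by
  simp only [mixedNorm, lNorm_one]
  exact sum_congr rfl fun j _ => abs_of_nonneg (sum_nonneg fun i _ => abs_nonneg _)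

lemma mixedNorm_top_top_le {x : Fin m → Fin k → ℝ} {c : ℝ} (hc : 0 ≤ c)
    (h : ∀ i j, |x i j| ≤ c) : mixedNorm ∞ ∞ x ≤ c :=
  lNorm_top_le hc fun j => by
    rw [abs_of_nonneg (lNorm_nonneg _ _)]
    exact lNorm_top_le hc fun i => h i j

lemma mixedNorm_le_rpow_mul [NeZero m] [NeZero k] {p q θ σ : ℝ≥0∞} (hq : q ≠ 0) (hqp : q ≤ p)
    (hσ : σ ≠ 0) (hσθ : σ ≤ θ) (x : Fin m → Fin k → ℝ) :
    mixedNorm q σ x ≤ (m : ℝ) ^ (ir q - ir p) * (k : ℝ) ^ (ir σ - ir θ) * mixedNorm p θ x := by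
  have hA : (0 : ℝ) ≤ (m : ℝ) ^ (ir q - ir p) := by positivity
  unfold mixedNorm
  calc lNorm σ (fun j => lNorm q fun i => x i j)
      ≤ lNorm σ (fun j => (m : ℝ) ^ (ir q - ir p) * lNorm p fun i => x i j) :=
        lNorm_mono fun j => by
          rw [abs_of_nonneg (lNorm_nonneg _ _), abs_of_nonneg (mul_nonneg hA (lNorm_nonneg _ _))]
          simpa using lNorm_le_card_rpow_mul hq hqp fun i => x i j
    _ = (m : ℝ) ^ (ir q - ir p) * lNorm σ (fun j => lNorm p fun i => x i j) :=
        lNorm_const_mul hσ hA _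
    _ ≤ (m : ℝ) ^ (ir q - ir p) *
          ((k : ℝ) ^ (ir σ - ir θ) * lNorm θ (fun j => lNorm p fun i => x i j)) := by
        gcongr
        simpa using lNorm_le_card_rpow_mul hσ hσθ fun j => lNorm p fun i => x i j
    _ = _ := by ring

lemma mem_mixedBall_of_abs_le [NeZero m] [NeZero k] {p θ : ℝ≥0∞} (hp : p ≠ 0) (hθ : θ ≠ 0)
    {x : Fin m → Fin k → ℝ} (hx : ∀ i j, |x i j| ≤ (m : ℝ) ^ (-ir p) * (k : ℝ) ^ (-ir θ)) :
    x ∈ mixedBall m k p θ := by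
  have hm : (0 : ℝ) < m := by exact_mod_cast Nat.pos_of_neZero m
  have hk : (0 : ℝ) < k := by exact_mod_cast Nat.pos_of_neZero k
  calc mixedNorm p θ x ≤ (m : ℝ) ^ (ir p - ir ∞) * (k : ℝ) ^ (ir θ - ir ∞) * mixedNorm ∞ ∞ x :=
        mixedNorm_le_rpow_mul hp le_top hθ le_top x
    _ ≤ (m : ℝ) ^ ir p * (k : ℝ) ^ ir θ * ((m : ℝ) ^ (-ir p) * (k : ℝ) ^ (-ir θ)) := by
        simp only [ir_top, sub_zero]
        gcongr
        exact mixedNorm_top_top_le (by positivity) hx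
    _ = 1 := by
        rw [Real.rpow_neg hm.le, Real.rpow_neg hk.le]
        field_simp

lemma rpow_mul_sum_abs_le_mixedNorm [NeZero m] [NeZero k] {q σ : ℝ≥0∞} (hq : 1 ≤ q) (hσ : 1 ≤ σ)
    (x : Fin m → Fin k → ℝ) :
    (m : ℝ) ^ (ir q - 1) * (k : ℝ) ^ (ir σ - 1) * ∑ j, ∑ i, |x i j| ≤ mixedNorm q σ x := by
  have hm : (0 : ℝ) < m := by exact_mod_cast Nat.pos_of_neZero m
  have hk : (0 : ℝ) < k := by exact_mod_cast Nat.pos_of_neZero k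
  have hholder := mixedNorm_le_rpow_mul one_ne_zero hq one_ne_zero hσ x
  rw [ir_one, mixedNorm_one_one] at hholder
  calc (m : ℝ) ^ (ir q - 1) * (k : ℝ) ^ (ir σ - 1) * ∑ j, ∑ i, |x i j|
      ≤ (m : ℝ) ^ (ir q - 1) * (k : ℝ) ^ (ir σ - 1) *
          ((m : ℝ) ^ (1 - ir q) * (k : ℝ) ^ (1 - ir σ) * mixedNorm q σ x) := by gcongr
    _ = mixedNorm q σ x := by
        rw [← neg_sub (ir q), ← neg_sub (ir σ), Real.rpow_neg hm.le, Real.rpow_neg hk.le]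
        field_simp

end mixedNorm

section kolWidth

variable {m k n : ℕ} {M : Set (Fin m → Fin k → ℝ)} {q σ : ℝ≥0∞} {r R : ℝ}

lemma iInf_mixedNorm_sub_le (L : Submodule ℝ (Fin m → Fin k → ℝ)) (x : Fin m → Fin k → ℝ) :
    ⨅ y : L, mixedNorm q σ (x - (y : Fin m → Fin k → ℝ)) ≤ mixedNorm q σ x := by
  have hbdd : BddBelow (Set.range fun y : L => mixedNorm q σ (x - (y : Fin m → Fin k → ℝ))) :=
    ⟨0, by rintro _ ⟨y, rfl⟩; exact mixedNorm_nonneg _ _ _⟩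
  simpa using ciInf_le hbdd 0

lemma kolWidth_le (hR : 0 ≤ R) (h : ∀ x ∈ M, mixedNorm q σ x ≤ R) :
    kolWidth m k n M q σ ≤ R := by
  refine (ciInf_le ⟨0, ?_⟩ ⟨⊥, by simp⟩).trans ?_
  · rintro _ ⟨L, rfl⟩
    exact Real.iSup_nonneg fun x => Real.iInf_nonneg fun y => mixedNorm_nonneg _ _ _
  · exact Real.iSup_le (fun x => (iInf_mixedNorm_sub_le _ _).trans (h x x.2)) hR

lemma le_kolWidth (hM : ∀ x ∈ M, mixedNorm q σ x ≤ R)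
    (h : ∀ L : Submodule ℝ (Fin m → Fin k → ℝ), finrank ℝ L ≤ n →
      ∃ x ∈ M, ∀ y ∈ L, r ≤ mixedNorm q σ (x - y)) :
    r ≤ kolWidth m k n M q σ := by
  have : Nonempty {L : Submodule ℝ (Fin m → Fin k → ℝ) // finrank ℝ L ≤ n} := ⟨⟨⊥, by simp⟩⟩
  refine le_ciInf fun L => ?_
  obtain ⟨x, hx, hfar⟩ := h L.1 L.2
  have : Nonempty L.1 := ⟨0⟩
  have hbdd : BddAbove (Set.range fun x : M =>
      ⨅ y : L.1, mixedNorm q σ ((x : Fin m → Fin k → ℝ) - (y : Fin m → Fin k → ℝ))) :=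
    ⟨R, by rintro _ ⟨x, rfl⟩; exact (iInf_mixedNorm_sub_le _ _).trans (hM x x.2)⟩
  exact (le_ciInf fun y : L.1 => hfar y y.2).trans (le_ciSup hbdd ⟨x, hx⟩)

end kolWidth

lemma exists_mem_mixedBall_forall_le_mixedNorm_sub {m k : ℕ} [NeZero m] [NeZero k]
    {p θ q σ : ℝ≥0∞} (hp : p ≠ 0) (hθ : θ ≠ 0) (hq : 1 ≤ q) (hσ : 1 ≤ σ)
    (L : Submodule ℝ (Fin m → Fin k → ℝ)) (hL : 2 * finrank ℝ L ≤ m * k) :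
    ∃ x ∈ mixedBall m k p θ, ∀ y ∈ L,
      1 / 2 * ((m : ℝ) ^ (ir q - ir p) * (k : ℝ) ^ (ir σ - ir θ)) ≤ mixedNorm q σ (x - y) := by
  have hm : (0 : ℝ) < m := by exact_mod_cast Nat.pos_of_neZero m
  have hk : (0 : ℝ) < k := by exact_mod_cast Nat.pos_of_neZero k
  let uncurry := (LinearEquiv.curry ℝ ℝ (Fin m) (Fin k)).symm
  let L' := L.map uncurry.toLinearMap
  have hL' : finrank ℝ L' = finrank ℝ L := LinearEquiv.finrank_map_eq uncurry L
  obtain ⟨ε, hε, hfar⟩ := L'.exists_abs_eq_one_card_sub_finrank_le_sum_abs_sub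
  set s : ℝ := (m : ℝ) ^ (-ir p) * (k : ℝ) ^ (-ir θ)
  have hs : 0 < s := by positivity
  refine ⟨fun i j => s * ε (i, j), mem_mixedBall_of_abs_le hp hθ fun i j => by
    rw [abs_mul, hε, mul_one, abs_of_pos hs], fun y hy => ?_⟩
  have hcount : (m : ℝ) * k / 2 ≤ ∑ z, |ε z - (s⁻¹ • uncurry y) z| := by
    refine le_trans ?_ (hfar _ (L'.smul_mem _ (Submodule.mem_map_of_mem hy)))
    have : (2 * finrank ℝ L : ℝ) ≤ m * k := by exact_mod_cast hL
    simp only [Fintype.card_prod, Fintype.card_fin, Nat.cast_mul, hL']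
    linarith
  have hsum : s * ∑ z, |ε z - (s⁻¹ • uncurry y) z| =
      ∑ j, ∑ i, |((fun i j => s * ε (i, j)) - y) i j| := by
    rw [sum_comm, ← Fintype.sum_prod_type', mul_sum]
    refine sum_congr rfl fun z _ => ?_
    have hz : s * ε (z.1, z.2) - y z.1 z.2 = s * (ε z - s⁻¹ * uncurry y z) := by
      rw [mul_sub, mul_inv_cancel_left₀ hs.ne']
      rfl
    simp only [Pi.sub_apply, Pi.smul_apply, smul_eq_mul, hz, abs_mul, abs_of_pos hs]
  calc 1 / 2 * ((m : ℝ) ^ (ir q - ir p) * (k : ℝ) ^ (ir σ - ir θ))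
      = (m : ℝ) ^ (ir q - 1) * (k : ℝ) ^ (ir σ - 1) * (s * ((m : ℝ) * k / 2)) := by
        simp only [s, sub_eq_add_neg, Real.rpow_add hm, Real.rpow_add hk, Real.rpow_neg_one]
        field_simp
    _ ≤ (m : ℝ) ^ (ir q - 1) * (k : ℝ) ^ (ir σ - 1) *
          ∑ j, ∑ i, |((fun i j => s * ε (i, j)) - y) i j| := by
        rw [← hsum]
        gcongr
    _ ≤ mixedNorm q σ ((fun i j => s * ε (i, j)) - y) := rpow_mul_sum_abs_le_mixedNorm hq hσ _

/-- There are absolute constants `c, C > 0` such that for all `1 ≤ q ≤ p ≤ ∞`,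
`1 ≤ σ ≤ θ ≤ ∞`, `m, k ≥ 1` and `0 ≤ n ≤ mk/2`,
`c ⋅ m^{1/q−1/p} k^{1/σ−1/θ} ≤ d_n(B^{m,k}_{p,θ}, l^{m,k}_{q,σ})
  ≤ C ⋅ m^{1/q−1/p} k^{1/σ−1/θ}`. -/
theorem statement6 :
    ∃ c C : ℝ, 0 < c ∧ 0 < C ∧
      ∀ (p q θ σ : ℝ≥0∞), 1 ≤ q → q ≤ p → 1 ≤ σ → σ ≤ θ →
      ∀ (m k n : ℕ), 0 < m → 0 < k → 2 * n ≤ m * k →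
        c * ((m : ℝ) ^ (ir q - ir p) * (k : ℝ) ^ (ir σ - ir θ)) ≤
            kolWidth m k n (mixedBall m k p θ) q σ ∧
          kolWidth m k n (mixedBall m k p θ) q σ ≤
            C * ((m : ℝ) ^ (ir q - ir p) * (k : ℝ) ^ (ir σ - ir θ)) := by
  refine ⟨1 / 2, 1, by norm_num, one_pos, fun p q θ σ hq hqp hσ hσθ m k n hm hk hn => ?_⟩
  have : NeZero m := ⟨hm.ne'⟩
  have : NeZero k := ⟨hk.ne'⟩
  have hq0 : q ≠ 0 := (zero_lt_one.trans_le hq).ne'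
  have hσ0 : σ ≠ 0 := (zero_lt_one.trans_le hσ).ne'
  have hball : ∀ x ∈ mixedBall m k p θ,
      mixedNorm q σ x ≤ (m : ℝ) ^ (ir q - ir p) * (k : ℝ) ^ (ir σ - ir θ) := fun x hx =>
    (mixedNorm_le_rpow_mul hq0 hqp hσ0 hσθ x).trans (mul_le_of_le_one_right (by positivity) hx)
  refine ⟨le_kolWidth hball fun L hL => ?_, by simpa using kolWidth_le (by positivity) hball⟩
  exact exists_mem_mixedBall_forall_le_mixedNorm_sub (ne_bot_of_le_ne_bot hq0 hqp)
    (ne_bot_of_le_ne_bot hσ0 hσθ) hq hσ L (by omega)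

end
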